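/- Choice on the natural numbers C_ℕ is strongly Weihrauch equivalent to the complementary minimum function min^c, and also to the maximum function max on bounded sequences. -/

import Mathlib

open scoped Classical

/-! ## Basic notions of Weihrauch complexity -/

/-- The finite prefix of length `m` of a point of Baire space, as a list. -/
def pref (p : ℕ → ℕ) (m : ℕ) : List ℕ := List.ofFn (fun i : Fin m => p i)

/-- Type-2 computability of a partial function on Baire space, defined via monotone
computable word functions producing longer and longer prefixes of the output. -/
def BaireComputable (F : (ℕ → ℕ) →. (ℕ → ℕ)) : Prop :=
  ∃ ψ : List ℕ → List ℕ, Computable ψ ∧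
    (∀ u v : List ℕ, u <+: v → ψ u <+: ψ v) ∧
    ∀ p q, q ∈ F p → ∀ n, ∃ m, (ψ (pref p m))[n]? = some (q n)

/-- The interleaving pairing `⟨p,q⟩` on Baire space. -/
def pairB (p q : ℕ → ℕ) : ℕ → ℕ := fun n => if n % 2 = 0 then p (n / 2) else q (n / 2)

def evenPart (r : ℕ → ℕ) : ℕ → ℕ := fun n => r (2 * n)

def oddPart (r : ℕ → ℕ) : ℕ → ℕ := fun n => r (2 * n + 1)

/-- The `i`-th component of the countable tupling `⟨p₀,p₁,…⟩⟨i,k⟩ = pᵢ(k)`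
(using the Cantor pairing). -/
def proj (r : ℕ → ℕ) (i : ℕ) : ℕ → ℕ := fun k => r (Nat.pair i k)

/-- A represented space: a set `X` together with a surjective partial map
from Baire space onto `X`. -/
structure RepSp (X : Type*) where
  δ : (ℕ → ℕ) →. X
  surj : ∀ x : X, ∃ p, x ∈ δ p

theorem mem_part_mk {α : Type*} {D : Prop} {g : D → α} {a : α} (h : D) (e : g h = a) :
    a ∈ Part.mk D g := Part.mem_mk_iff.mpr ⟨h, e⟩

/-- The identity representation of Baire space. -/
def repBaire : RepSp (ℕ → ℕ) where
  δ := fun p => Part.some p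
  surj := fun p => ⟨p, Part.mem_some p⟩

/-- The standard representation of the natural numbers. -/
def repNat : RepSp ℕ where
  δ := fun p => Part.some (p 0)
  surj := fun n => ⟨fun _ => n, Part.mem_some n⟩

/-- `F` is a realizer of the problem `f :⊆ X ⇉ Y` (a problem is a multi-valued
function `f : X → Set Y`, whose domain is the set of `x` with `f x` nonempty). -/
def Realizes {X Y : Type*} (δX : RepSp X) (δY : RepSp Y)
    (f : X → Set Y) (F : (ℕ → ℕ) →. (ℕ → ℕ)) : Prop :=
  ∀ p x, x ∈ δX.δ p → (f x).Nonempty → ∃ q ∈ F p, ∃ y ∈ δY.δ q, y ∈ f x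

/-- Weihrauch reducibility: `f ≤_W g` iff there are computable `H, K` such that
`p ↦ H⟨p, G(K(p))⟩` realizes `f` whenever `G` realizes `g`. -/
def WRed {X Y Z W : Type*} (δX : RepSp X) (δY : RepSp Y) (δZ : RepSp Z) (δW : RepSp W)
    (f : X → Set Y) (g : Z → Set W) : Prop :=
  ∃ H K : (ℕ → ℕ) →. (ℕ → ℕ), BaireComputable H ∧ BaireComputable K ∧
    ∀ G : (ℕ → ℕ) →. (ℕ → ℕ), Realizes δZ δW g G →
      Realizes δX δY f
        (fun p => (K p).bind fun r => (G r).bind fun q => H (pairB p q))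

/-- Strong Weihrauch reducibility: `f ≤_sW g` iff there are computable `H, K`
such that `H ∘ G ∘ K` realizes `f` whenever `G` realizes `g`. -/
def SWRed {X Y Z W : Type*} (δX : RepSp X) (δY : RepSp Y) (δZ : RepSp Z) (δW : RepSp W)
    (f : X → Set Y) (g : Z → Set W) : Prop :=
  ∃ H K : (ℕ → ℕ) →. (ℕ → ℕ), BaireComputable H ∧ BaireComputable K ∧
    ∀ G : (ℕ → ℕ) →. (ℕ → ℕ), Realizes δZ δW g G →
      Realizes δX δY f (fun p => (K p).bind fun r => (G r).bind fun q => H q)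

/-- Weihrauch equivalence. -/
def WEquiv {X Y Z W : Type*} (δX : RepSp X) (δY : RepSp Y) (δZ : RepSp Z) (δW : RepSp W)
    (f : X → Set Y) (g : Z → Set W) : Prop :=
  WRed δX δY δZ δW f g ∧ WRed δZ δW δX δY g f

/-- Strong Weihrauch equivalence. -/
def SWEquiv {X Y Z W : Type*} (δX : RepSp X) (δY : RepSp Y) (δZ : RepSp Z) (δW : RepSp W)
    (f : X → Set Y) (g : Z → Set W) : Prop :=
  SWRed δX δY δZ δW f g ∧ SWRed δZ δW δX δY g f

/-- The identity problem on Baire space. -/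
def idProblem : (ℕ → ℕ) → Set (ℕ → ℕ) := fun p => {p}

/-! ## Constructions on representations and problems -/

/-- Representation of the product of two represented spaces. -/
def prodRep {X Z : Type*} (δX : RepSp X) (δZ : RepSp Z) : RepSp (X × Z) where
  δ := fun r => (δX.δ (evenPart r)).bind fun x => (δZ.δ (oddPart r)).map fun z => (x, z)
  surj := by
    intro xz
    obtain ⟨p, hp⟩ := δX.surj xz.1
    obtain ⟨q, hq⟩ := δZ.surj xz.2
    have he : evenPart (pairB p q) = p := by
      funext n
      have h1 : (2 * n) % 2 = 0 := by omega
      have h2 : (2 * n) / 2 = n := by omega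
      simp [evenPart, pairB, h1, h2]
    have ho : oddPart (pairB p q) = q := by
      funext n
      have h1 : ¬((2 * n + 1) % 2 = 0) := by omega
      have h2 : (2 * n + 1) / 2 = n := by omega
      simp [oddPart, pairB, h1, h2]
    refine ⟨pairB p q, Part.mem_bind_iff.mpr ⟨xz.1, by rw [he]; exact hp,
      (Part.mem_map_iff _).mpr ⟨xz.2, by rw [ho]; exact hq, rfl⟩⟩⟩

/-- The product `f × g` of two problems. -/
def prodProblem {X Y Z W : Type*} (f : X → Set Y) (g : Z → Set W) :
    X × Z → Set (Y × W) :=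
  fun xz => f xz.1 ×ˢ g xz.2

/-- Representation of the disjoint union of two represented spaces. -/
def sumRep {X Z : Type*} (δX : RepSp X) (δZ : RepSp Z) : RepSp (X ⊕ Z) where
  δ := fun r =>
    if r 0 = 0 then (δX.δ fun n => r (n + 1)).map Sum.inl
    else if r 0 = 1 then (δZ.δ fun n => r (n + 1)).map Sum.inr
    else Part.none
  surj := by
    rintro (x | z)
    · obtain ⟨p, hp⟩ := δX.surj x
      refine ⟨fun n => Nat.casesOn n 0 p, ?_⟩
      show Sum.inl x ∈ (δX.δ p).map Sum.inl
      exact (Part.mem_map_iff _).mpr ⟨x, hp, rfl⟩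
    · obtain ⟨p, hp⟩ := δZ.surj z
      refine ⟨fun n => Nat.casesOn n 1 p, ?_⟩
      show Sum.inr z ∈ (δZ.δ p).map Sum.inr
      exact (Part.mem_map_iff _).mpr ⟨z, hp, rfl⟩

/-- The coproduct `f ⊔ g` of two problems. -/
def coprodProblem {X Y Z W : Type*} (f : X → Set Y) (g : Z → Set W) :
    X ⊕ Z → Set (Y ⊕ W)
  | Sum.inl x => Sum.inl '' f x
  | Sum.inr z => Sum.inr '' g z

/-- The meet `f ⊓ g` of two problems. -/
def meetProblem {X Y Z W : Type*} (f : X → Set Y) (g : Z → Set W) :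
    X × Z → Set (Y ⊕ W) :=
  fun xz => Sum.inl '' f xz.1 ∪ Sum.inr '' g xz.2

/-- Representation of the space of sequences `X^ℕ` via the countable tupling. -/
noncomputable def seqRep {X : Type*} (δX : RepSp X) : RepSp (ℕ → X) where
  δ := fun r => Part.mk (∀ i : ℕ, ∃ x, x ∈ δX.δ (proj r i))
    (fun h i => Classical.choose (h i))
  surj := by
    intro x
    choose p hp using fun i => δX.surj (x i)
    refine ⟨fun m => p (Nat.unpair m).1 (Nat.unpair m).2, ?_⟩
    have hproj : ∀ i, proj (fun m => p (Nat.unpair m).1 (Nat.unpair m).2) i = p i := by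
      intro i; funext k; simp [proj]
    have hdom : ∀ i : ℕ, ∃ y, y ∈ δX.δ (proj (fun m => p (Nat.unpair m).1 (Nat.unpair m).2) i) :=
      fun i => ⟨x i, by rw [hproj i]; exact hp i⟩
    refine mem_part_mk hdom ?_
    funext i
    exact Part.mem_unique (Classical.choose_spec (hdom i)) (by rw [hproj i]; exact hp i)

/-- The parallelization `f̂` of a problem. -/
def parallelProblem {X Y : Type*} (f : X → Set Y) : (ℕ → X) → Set (ℕ → Y) :=
  fun x => {y | ∀ i, y i ∈ f (x i)}

/-- Representation of the finite power `Xⁿ` via the countable tupling. -/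
noncomputable def finProdRep (n : ℕ) {X : Type*} (δX : RepSp X) : RepSp (Fin n → X) where
  δ := fun r => Part.mk (∀ i : Fin n, ∃ x, x ∈ δX.δ (proj r i))
    (fun h i => Classical.choose (h i))
  surj := by
    intro x
    choose p hp using fun i => δX.surj (x i)
    classical
    refine ⟨fun m => if h : (Nat.unpair m).1 < n then p ⟨_, h⟩ (Nat.unpair m).2 else 0, ?_⟩
    have hproj : ∀ i : Fin n,
        proj (fun m => if h : (Nat.unpair m).1 < n then p ⟨_, h⟩ (Nat.unpair m).2 else 0) i
          = p i := by
      intro i; funext k; simp [proj, i.isLt]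
    have hdom : ∀ i : Fin n, ∃ y, y ∈ δX.δ
        (proj (fun m => if h : (Nat.unpair m).1 < n then p ⟨_, h⟩ (Nat.unpair m).2 else 0) i) :=
      fun i => ⟨x i, by rw [hproj i]; exact hp i⟩
    refine mem_part_mk hdom ?_
    funext i
    exact Part.mem_unique (Classical.choose_spec (hdom i)) (by rw [hproj i]; exact hp i)

/-- The `n`-fold product `fⁿ` of a problem with itself. -/
def finProdProblem (n : ℕ) {X Y : Type*} (f : X → Set Y) :
    (Fin n → X) → Set (Fin n → Y) :=
  fun x => {y | ∀ i, y i ∈ f (x i)}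

/-- Representation of the space `X*` of words over `X`. -/
noncomputable def starRep {X : Type*} (δX : RepSp X) : RepSp (Σ n : ℕ, Fin n → X) where
  δ := fun r => Part.mk (∀ i : Fin (r 0), ∃ x, x ∈ δX.δ (proj (fun m => r (m + 1)) i))
    (fun h => ⟨r 0, fun i => Classical.choose (h i)⟩)
  surj := by
    rintro ⟨n, x⟩
    choose p hp using fun i => δX.surj (x i)
    classical
    have hproj : ∀ i : Fin n,
        proj (fun m' => if h : (Nat.unpair m').1 < n then p ⟨_, h⟩ (Nat.unpair m').2 else 0) i
          = p i := by
      intro i; funext k; simp [proj, i.isLt]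
    have hdom : ∀ i : Fin n, ∃ y, y ∈ δX.δ
        (proj (fun m' => if h : (Nat.unpair m').1 < n then p ⟨_, h⟩ (Nat.unpair m').2 else 0) i) :=
      fun i => ⟨x i, by rw [hproj i]; exact hp i⟩
    refine ⟨fun m => Nat.casesOn m n
      (fun m' => if h : (Nat.unpair m').1 < n then p ⟨_, h⟩ (Nat.unpair m').2 else 0),
      Part.mem_mk_iff.mpr ⟨hdom, ?_⟩⟩
    have hx : (fun i : Fin n => Classical.choose (hdom i)) = x := funext fun i =>
      Part.mem_unique (Classical.choose_spec (hdom i)) (by rw [hproj i]; exact hp i)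
    exact congrArg (Sigma.mk n) hx

/-- The finite parallelization `f*` of a problem. -/
def starProblem {X Y : Type*} (f : X → Set Y) :
    (Σ n : ℕ, Fin n → X) → Set (Σ n : ℕ, Fin n → Y) :=
  fun x => {y | ∃ e : x.1 = y.1, ∀ i : Fin x.1, y.2 (Fin.cast e i) ∈ f (x.2 i)}

/-- Representation of a countable disjoint union of represented spaces. -/
def csumRep {Z : ℕ → Type*} (δZ : ∀ i, RepSp (Z i)) : RepSp (Σ i, Z i) where
  δ := fun r => ((δZ (r 0)).δ (fun n => r (n + 1))).map fun z => ⟨r 0, z⟩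
  surj := by
    rintro ⟨i, z⟩
    obtain ⟨p, hp⟩ := (δZ i).surj z
    exact ⟨fun n => Nat.casesOn n i p, (Part.mem_map_iff _).mpr ⟨z, hp, rfl⟩⟩

/-- The countable coproduct `⊔ᵢ gᵢ` of a sequence of problems. -/
def csumProblem {Z W : ℕ → Type*} (g : ∀ i, Z i → Set (W i)) :
    (Σ i, Z i) → Set (Σ i, W i) :=
  fun x => Sigma.mk x.1 '' g x.1 x.2

/-! ## Limits and jumps -/

/-- The limit map on Baire space, as a (single-valued) problem:
`lim⟨p₀,p₁,…⟩` is the pointwise limit of the sequence `(pₙ)ₙ`. -/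
def limProblem : (ℕ → ℕ) → Set (ℕ → ℕ) :=
  fun r => {q | ∀ n, ∃ N, ∀ m, N ≤ m → proj r m n = q n}

/-- The limit map on Baire space as a partial (single-valued) function. -/
noncomputable def limP : (ℕ → ℕ) →. (ℕ → ℕ) :=
  fun r => Part.mk (∀ n, ∃ N, ∀ m, N ≤ m → proj r m n = proj r N n)
    (fun h n => proj r (Classical.choose (h n)) n)

/-- The jump `(X′, δ′)` of a represented space: `δ′ := δ ∘ lim`. -/
noncomputable def jumpRep {X : Type*} (δ : RepSp X) : RepSp X where
  δ := fun p => (limP p).bind δ.δ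
  surj := by
    intro x
    obtain ⟨p, hp⟩ := δ.surj x
    refine ⟨fun m => p (Nat.unpair m).2, Part.mem_bind_iff.mpr ⟨p, ?_, hp⟩⟩
    have hproj : ∀ m, proj (fun m => p (Nat.unpair m).2) m = p := by
      intro m; funext k; simp [proj]
    have hdom : ∀ n, ∃ N, ∀ m, N ≤ m →
        proj (fun m => p (Nat.unpair m).2) m n = proj (fun m => p (Nat.unpair m).2) N n :=
      fun n => ⟨0, fun m _ => by rw [hproj m, hproj 0]⟩
    refine mem_part_mk hdom ?_
    funext n
    rw [hproj]

/-! ## Choice problems -/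

/-- The representation of subsets of `ℕ` by enumerations of their complements:
`p` is a name of `A` iff `p` enumerates (via `p m = n + 1`) exactly the `n ∉ A`. -/
def enumNegRep : RepSp (Set ℕ) where
  δ := fun p => Part.some {n | ∀ m, p m ≠ n + 1}
  surj := by
    intro S
    by_cases h : Sᶜ.Nonempty
    · obtain ⟨f, hf⟩ := (Set.to_countable Sᶜ).exists_eq_range h
      refine ⟨fun m => f m + 1, Part.mem_some_iff.mpr ?_⟩
      ext n
      simp only [Set.mem_setOf_eq]
      constructor
      · intro hn m hm
        have hfm : f m ∈ Sᶜ := by rw [hf]; exact ⟨m, rfl⟩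
        have hfmn : f m = n := by omega
        rw [hfmn] at hfm
        exact hfm hn
      · intro hn
        by_contra hS
        have hmem : n ∈ Sᶜ := hS
        rw [hf] at hmem
        obtain ⟨m, hm⟩ := hmem
        exact hn m (by omega)
    · refine ⟨fun _ => 0, Part.mem_some_iff.mpr ?_⟩
      have hS : S = Set.univ := by
        rw [← compl_compl S, Set.not_nonempty_iff_eq_empty.mp h, Set.compl_empty]
      rw [hS]
      ext n
      simp

/-- Choice on the natural numbers: given (a name of) a nonempty set `A ⊆ ℕ`,
find an element of `A`. -/
def CNat : Set ℕ → Set ℕ := fun A => A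

/-- Choice on the finite set `{0, …, k-1}`. -/
def CFin (k : ℕ) : Set ℕ → Set ℕ := fun A => {n | n ∈ A ∧ A ⊆ Set.Iio k}

/-- The limited principle of omniscience as a problem. -/
noncomputable def LPOProblem : (ℕ → ℕ) → Set ℕ :=
  fun p => {if ∃ k, p k = 0 then 1 else 0}


/-- Restriction of a problem on Baire space to a set `A`. -/
def restrictProblem (F : (ℕ → ℕ) → Set (ℕ → ℕ)) (A : Set (ℕ → ℕ)) :
    (ℕ → ℕ) → Set (ℕ → ℕ) :=
  fun p => {q | q ∈ F p ∧ p ∈ A}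

/-- A problem is a fractal if it has a representative on Baire space all of whose
restrictions to clopen sets meeting its domain are Weihrauch equivalent to it. -/
def Fractal {X Y : Type*} (δX : RepSp X) (δY : RepSp Y) (f : X → Set Y) : Prop :=
  ∃ F : (ℕ → ℕ) → Set (ℕ → ℕ),
    WEquiv repBaire repBaire δX δY F f ∧
    ∀ A : Set (ℕ → ℕ), IsClopen A → (A ∩ {p | (F p).Nonempty}).Nonempty →
      WEquiv repBaire repBaire repBaire repBaire (restrictProblem F A) F

/-- A problem `f` is densely realized if for every name `p` of an admissible instance
the set of names of solutions is dense in the domain of the output representation. -/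
def DenselyRealized {X Y : Type*} (δX : RepSp X) (δY : RepSp Y) (f : X → Set Y) : Prop :=
  ∀ p, ∀ x ∈ δX.δ p, (f x).Nonempty →
    {q : ℕ → ℕ | (δY.δ q).Dom} ⊆ closure {q : ℕ → ℕ | ∃ y ∈ δY.δ q, y ∈ f x}

/-- Turing reducibility on Baire space: `a` is computable from `b`. -/
def TRed (a b : ℕ → ℕ) : Prop := ∃ F, BaireComputable F ∧ a ∈ F b

/-- The two-point space `{p, q}` represented by the identity. -/
def pqRep (p q : ℕ → ℕ) : RepSp {r : ℕ → ℕ // r = p ∨ r = q} where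
  δ := fun r => Part.mk (r = p ∨ r = q) (fun h => ⟨r, h⟩)
  surj := fun x => ⟨x.1, Part.mem_mk_iff.mpr ⟨x.2, rfl⟩⟩

/-- The problem `m_A` associated with a set `A ⊆ ℕ`. -/
noncomputable def mProblem (p q : ℕ → ℕ) (A : Set ℕ) :
    ℕ → Set {r : ℕ → ℕ // r = p ∨ r = q} :=
  fun n => {y | y.1 = if n ∈ A then p else q}

/-- The join `A ⊕ B` of two sets of natural numbers. -/
def mJoin (A B : Set ℕ) : Set ℕ :=
  {k | (k % 2 = 0 ∧ k / 2 ∈ A) ∨ (k % 2 = 1 ∧ k / 2 ∈ B)}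

/-- The cardinality `#f` of a problem: the supremum of the cardinalities of sets
`M ⊆ dom f` whose images under `f` are pairwise disjoint. -/
noncomputable def problemCard {X Y : Type} (f : X → Set Y) : Cardinal :=
  sSup {c | ∃ M : Set X, (∀ x ∈ M, (f x).Nonempty) ∧ M.PairwiseDisjoint f ∧
    c = Cardinal.mk M}

/-- Computability of a problem: it has a computable realizer. -/
def ComputableProblem {X Y : Type*} (δX : RepSp X) (δY : RepSp Y) (f : X → Set Y) : Prop :=
  ∃ F, BaireComputable F ∧ Realizes δX δY f F

/-- The minimum function on Baire space. -/
def minProblem : (ℕ → ℕ) → Set ℕ :=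
  fun p => {n | n ∈ Set.range p ∧ ∀ m, n ≤ p m}

/-- The complementary minimum function `minᶜ`. -/
def mincProblem : (ℕ → ℕ) → Set ℕ :=
  fun p => {n | (∀ m, p m ≠ n) ∧ ∀ j, j < n → ∃ m, p m = j}

/-- The maximum function on Baire space (defined on bounded sequences). -/
def maxProblem : (ℕ → ℕ) → Set ℕ :=
  fun p => {n | n ∈ Set.range p ∧ ∀ m, p m ≤ n}

/-!
Both `minᶜ` and `max` have at most one solution `v`, characterised by a co-c.e. property of `v`
together with a c.e. property witnessed at a finite stage `t`: `v ∉ range r` and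
`{0, …, v - 1} ⊆ {r 0, …, r (t - 1)}`, resp. `r ≤ v` and `v ∈ {r 0, …, r (t - 1)}`. From `r` one
can enumerate the complement of the nonempty set of such pairs `⟨v, t⟩`, so `C_ℕ` finds one and `v`
is read off. Conversely, if `p` enumerates the complement of `A` and `a = min A`, then `a + 1` is
the least number missing from `0, p 0, p 1, …`, and `a` is the maximum of the sequence that at
stage `⟨v, t⟩` outputs `v` if `1, …, v` occur among `p 0, …, p (t - 1)`, and `0` otherwise.
-/

theorem length_pref (p : ℕ → ℕ) (m : ℕ) : (pref p m).length = m := by simp [pref]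

theorem mem_pref {p : ℕ → ℕ} {m x : ℕ} : x ∈ pref p m ↔ ∃ i < m, p i = x := by
  simp [pref, List.mem_ofFn, Fin.exists_iff]

theorem take_pref (p : ℕ → ℕ) {k m : ℕ} (h : k ≤ m) : (pref p m).take k = pref p k :=
  List.ext_getElem (by simp [length_pref, h]) fun i _ _ => by simp [pref]

theorem getD_pref (p : ℕ → ℕ) {i m : ℕ} (h : i < m) : (pref p m).getD i 0 = p i := by
  simp [pref, h]

theorem exists_pref_forall_lt_mem {p : ℕ → ℕ} {v : ℕ} {g : ℕ → ℕ}
    (h : ∀ j < v, g j ∈ Set.range p) : ∃ t, ∀ j < v, g j ∈ pref p t := by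
  have hev : ∀ j ∈ Set.Iio v, ∀ᶠ t in Filter.atTop, g j ∈ pref p t := fun j hj => by
    obtain ⟨i, hi⟩ := h j hj
    exact Filter.eventually_atTop.2 ⟨i + 1, fun t ht => mem_pref.2 ⟨i, by omega, hi⟩⟩
  exact ((Set.finite_Iio v).eventually_all.2 hev).exists

theorem BaireComputable.of_prefix {F : (ℕ → ℕ) → ℕ → ℕ} (f : ℕ → List ℕ → ℕ) (hf : Primrec₂ f)
    (hF : ∀ p n, F p n = f n (pref p (n + 1))) : BaireComputable fun p => Part.some (F p) := by
  refine ⟨fun u => (List.range u.length).map fun i => f i (u.take (i + 1)), ?_, ?_, ?_⟩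
  · exact (Primrec.list_map (Primrec.list_range.comp Primrec.list_length)
      (hf.comp Primrec.snd (Primrec.list_take.comp (Primrec.succ.comp Primrec.snd)
        Primrec.fst)).to₂).to_comp
  · intro u v huv
    obtain ⟨w, rfl⟩ := huv
    dsimp only
    rw [List.length_append, List.range_add, List.map_append]
    refine List.prefix_iff_eq_take.2 ?_
    rw [List.take_left' (by simp)]
    refine List.map_congr_left fun i hi => ?_
    rw [List.take_append_of_le_length (by simp at hi; omega)]
  · intro p q hq n
    rw [Part.mem_some_iff.1 hq]
    refine ⟨n + 1, ?_⟩
    simp [length_pref, hF, take_pref]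

theorem primrecRel_mem {α : Type*} [Primcodable α] : PrimrecRel fun (x : α) (l : List α) => x ∈ l :=
  (PrimrecRel.exists_mem_list (Primrec.eq (α := α))).swap.of_eq fun _ _ => by simp [Function.swap]

theorem BaireComputable.const_comp_eval_zero {h : ℕ → ℕ} (hh : Primrec h) :
    BaireComputable fun q => Part.some fun _ => h (q 0) :=
  BaireComputable.of_prefix (fun _ u => h (u.getD 0 0))
    (hh.comp ((Primrec.list_getD 0).comp Primrec.snd (Primrec.const 0))).to₂
    fun q _ => by rw [getD_pref q (Nat.succ_pos _)]

theorem SWRed.of_image_subset {X Z : Type*} {δX : RepSp X} {δZ : RepSp Z} {f : X → Set ℕ}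
    {g : Z → Set ℕ} {K : (ℕ → ℕ) → ℕ → ℕ} {h : ℕ → ℕ}
    (hK : BaireComputable fun p => Part.some (K p)) (hh : Primrec h)
    (hKh : ∀ p x, x ∈ δX.δ p → (f x).Nonempty →
      ∃ z ∈ δZ.δ (K p), (g z).Nonempty ∧ h '' g z ⊆ f x) :
    SWRed δX repNat δZ repNat f g := by
  refine ⟨_, _, BaireComputable.const_comp_eval_zero hh, hK, fun G hG p x hx hfx => ?_⟩
  obtain ⟨z, hz, hgz, himage⟩ := hKh p x hx hfx
  obtain ⟨q, hq, w, hw, hwg⟩ := hG (K p) z hz hgz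
  refine ⟨fun _ => h (q 0), ?_, h w, Part.mem_some_iff.2 ?_, himage ⟨w, hwg, rfl⟩⟩
  · simp only [Part.mem_bind_iff, Part.mem_some_iff]
    exact ⟨K p, rfl, q, hq, rfl⟩
  · rw [Part.mem_some_iff.1 hw]

theorem mincProblem_subsingleton (r : ℕ → ℕ) : (mincProblem r).Subsingleton := by
  intro a ha b hb
  by_contra hab
  rcases lt_or_gt_of_ne hab with h | h
  · obtain ⟨m, hm⟩ := hb.2 a h
    exact ha.1 m hm
  · obtain ⟨m, hm⟩ := ha.2 b h
    exact hb.1 m hm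

theorem maxProblem_subsingleton (r : ℕ → ℕ) : (maxProblem r).Subsingleton := by
  rintro a ⟨⟨m, rfl⟩, ha⟩ b ⟨⟨k, rfl⟩, hb⟩
  exact le_antisymm (hb m) (ha k)

theorem succ_mem_range_of_lt_of_isLeast {p : ℕ → ℕ} {a j : ℕ}
    (ha : IsLeast {n | ∀ m, p m ≠ n + 1} a) (hj : j < a) : j + 1 ∈ Set.range p := by
  by_contra h
  have : a ≤ j := ha.2 fun m hm => h ⟨m, hm⟩
  omega

theorem cNat_swRed_of_isLeast {g : (ℕ → ℕ) → Set ℕ} {K : (ℕ → ℕ) → ℕ → ℕ} {h : ℕ → ℕ}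
    (hK : BaireComputable fun p => Part.some (K p)) (hh : Primrec h)
    (hg : ∀ r, (g r).Subsingleton)
    (hKg : ∀ p a, IsLeast {n | ∀ m, p m ≠ n + 1} a → ∃ b ∈ g (K p), h b = a) :
    SWRed enumNegRep repNat repBaire repNat CNat g := by
  refine SWRed.of_image_subset hK hh fun p A hA hne => ?_
  obtain rfl := Part.mem_some_iff.1 hA
  obtain ⟨b, hb, hba⟩ := hKg p _ (isLeast_csInf hne)
  refine ⟨_, Part.mem_some _, ⟨b, hb⟩, ?_⟩
  rintro _ ⟨c, hc, rfl⟩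
  rw [hg _ hc hb, hba]
  exact Nat.sInf_mem hne

def consZero (p : ℕ → ℕ) : ℕ → ℕ
  | 0 => 0
  | n + 1 => p n

theorem baireComputable_consZero : BaireComputable fun p => Part.some (consZero p) :=
  BaireComputable.of_prefix (fun n u => (0 :: u).getD n 0)
    ((Primrec.list_getD 0).comp (Primrec.list_cons.comp (Primrec.const 0) Primrec.snd)
      Primrec.fst) fun p n => by
    cases n with
    | zero => rfl
    | succ n => exact (getD_pref p (by omega)).symm

theorem succ_mem_mincProblem_consZero {p : ℕ → ℕ} {a : ℕ}
    (ha : IsLeast {n | ∀ m, p m ≠ n + 1} a) : a + 1 ∈ mincProblem (consZero p) := by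
  refine ⟨fun m => ?_, fun j hj => ?_⟩
  · cases m with
    | zero => exact (Nat.succ_ne_zero a).symm
    | succ m => exact ha.1 m
  · cases j with
    | zero => exact ⟨0, rfl⟩
    | succ j =>
      obtain ⟨m, hm⟩ := succ_mem_range_of_lt_of_isLeast ha (Nat.succ_lt_succ_iff.1 hj)
      exact ⟨m + 1, hm⟩

theorem cNat_swRed_minc : SWRed enumNegRep repNat repBaire repNat CNat mincProblem :=
  cNat_swRed_of_isLeast baireComputable_consZero (Primrec.nat_sub.comp Primrec.id (Primrec.const 1))
    mincProblem_subsingleton fun _ a ha => ⟨a + 1, succ_mem_mincProblem_consZero ha, rfl⟩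

def minLowerBound (p : ℕ → ℕ) (n : ℕ) : ℕ :=
  if ∀ j < n.unpair.1, j + 1 ∈ pref p n.unpair.2 then n.unpair.1 else 0

theorem minLowerBound_le {p : ℕ → ℕ} {a : ℕ} (ha : a ∈ {n | ∀ m, p m ≠ n + 1}) (n : ℕ) :
    minLowerBound p n ≤ a := by
  unfold minLowerBound
  split_ifs with h
  · by_contra! hlt
    obtain ⟨i, -, hi⟩ := mem_pref.1 (h a hlt)
    exact ha i hi
  · exact Nat.zero_le a

theorem mem_maxProblem_minLowerBound {p : ℕ → ℕ} {a : ℕ}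
    (ha : IsLeast {n | ∀ m, p m ≠ n + 1} a) : a ∈ maxProblem (minLowerBound p) := by
  obtain ⟨t, ht⟩ := exists_pref_forall_lt_mem fun j => succ_mem_range_of_lt_of_isLeast (j := j) ha
  refine ⟨⟨Nat.pair a t, ?_⟩, minLowerBound_le ha.1⟩
  simp only [minLowerBound, Nat.unpair_pair, if_pos ht]

open Primrec in
theorem baireComputable_minLowerBound : BaireComputable fun p => Part.some (minLowerBound p) := by
  refine BaireComputable.of_prefix
    (fun n u => if ∀ j ∈ List.range n.unpair.1, j + 1 ∈ u.take n.unpair.2 then n.unpair.1 else 0)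
    ?_ fun p n => ?_
  · have hmem : PrimrecRel fun (j : ℕ) (x : ℕ × List ℕ) => j + 1 ∈ x.2.take x.1.unpair.2 :=
      primrecRel_mem.comp (succ.comp fst)
        (list_take.comp (snd.comp (unpair.comp (fst.comp snd))) (snd.comp snd))
    exact (Primrec.ite (hmem.forall_mem_list.comp (list_range.comp (fst.comp (unpair.comp fst)))
      Primrec.id) (fst.comp (unpair.comp fst)) (const 0)).to₂
  · simp only [minLowerBound, List.mem_range,
      take_pref p ((Nat.unpair_right_le n).trans n.le_succ)]

theorem cNat_swRed_max : SWRed enumNegRep repNat repBaire repNat CNat maxProblem :=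
  cNat_swRed_of_isLeast baireComputable_minLowerBound Primrec.id maxProblem_subsingleton
    fun _ a ha => ⟨a, mem_maxProblem_minLowerBound ha, rfl⟩

/-- Stage `n = ⟨⟨v, t⟩, s⟩` rejects the candidate `⟨v, t⟩` if `¬ R (r s) v` or
`¬ Q (pref r t) v`. -/
def witnessEnum (R : ℕ → ℕ → Prop) (Q : List ℕ → ℕ → Prop) [DecidableRel R] [DecidableRel Q]
    (r : ℕ → ℕ) (n : ℕ) : ℕ :=
  if ¬ R (r n.unpair.2) n.unpair.1.unpair.1 ∨ ¬ Q (pref r n.unpair.1.unpair.2) n.unpair.1.unpair.1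
  then n.unpair.1 + 1 else 0

theorem enumNegRep_witnessEnum (R : ℕ → ℕ → Prop) (Q : List ℕ → ℕ → Prop) [DecidableRel R]
    [DecidableRel Q] (r : ℕ → ℕ) :
    enumNegRep.δ (witnessEnum R Q r) =
      Part.some {a | (∀ s, R (r s) a.unpair.1) ∧ Q (pref r a.unpair.2) a.unpair.1} := by
  refine congrArg Part.some (Set.ext fun a => ⟨fun ha => ?_, fun ⟨hR, hQ⟩ n hn => ?_⟩)
  · have hkeep : ∀ s, R (r s) a.unpair.1 ∧ Q (pref r a.unpair.2) a.unpair.1 :=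
      fun s => not_or.1 (by simpa [witnessEnum] using ha (Nat.pair a s)) |>.imp not_not.1 not_not.1
    exact ⟨fun s => (hkeep s).1, (hkeep 0).2⟩
  · unfold witnessEnum at hn
    split_ifs at hn with h
    obtain rfl : n.unpair.1 = a := by omega
    exact h.elim (· (hR _)) (· hQ)

open Primrec in
theorem baireComputable_witnessEnum {R : ℕ → ℕ → Prop} {Q : List ℕ → ℕ → Prop} [DecidableRel R]
    [DecidableRel Q] (hR : PrimrecRel R) (hQ : PrimrecRel Q) :
    BaireComputable fun r => Part.some (witnessEnum R Q r) := by
  refine BaireComputable.of_prefix (fun n u =>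
    if ¬ R (u.getD n.unpair.2 0) n.unpair.1.unpair.1 ∨
      ¬ Q (u.take n.unpair.1.unpair.2) n.unpair.1.unpair.1
    then n.unpair.1 + 1 else 0) ?_ fun r n => ?_
  · have hv : Primrec fun x : ℕ × List ℕ => x.1.unpair.1.unpair.1 :=
      fst.comp (unpair.comp (fst.comp (unpair.comp fst)))
    have ht : Primrec fun x : ℕ × List ℕ => x.1.unpair.1.unpair.2 :=
      snd.comp (unpair.comp (fst.comp (unpair.comp fst)))
    exact (Primrec.ite
      ((hR.comp ((list_getD 0).comp snd (snd.comp (unpair.comp fst))) hv).not.or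
        (hQ.comp (list_take.comp ht snd) hv).not)
      (succ.comp (fst.comp (unpair.comp fst))) (const 0)).to₂
  · have ht : n.unpair.1.unpair.2 ≤ n + 1 :=
      ((Nat.unpair_right_le _).trans (Nat.unpair_left_le n)).trans n.le_succ
    simp only [witnessEnum, getD_pref r (Nat.lt_succ_of_le (Nat.unpair_right_le n)),
      take_pref r ht]

theorem swRed_cNat_of_mem_iff_exists_stage {f : (ℕ → ℕ) → Set ℕ} {R : ℕ → ℕ → Prop}
    {Q : List ℕ → ℕ → Prop} [DecidableRel R] [DecidableRel Q] (hR : PrimrecRel R)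
    (hQ : PrimrecRel Q) (hf : ∀ r v, v ∈ f r ↔ ∃ t, (∀ s, R (r s) v) ∧ Q (pref r t) v) :
    SWRed repBaire repNat enumNegRep repNat f CNat := by
  refine SWRed.of_image_subset (baireComputable_witnessEnum hR hQ)
    (Primrec.fst.comp Primrec.unpair) fun r x hx ⟨v, hv⟩ => ?_
  obtain rfl := Part.mem_some_iff.1 hx
  obtain ⟨t, ht⟩ := (hf x v).1 hv
  refine ⟨_, enumNegRep_witnessEnum R Q x ▸ Part.mem_some _,
    ⟨Nat.pair v t, by simpa [CNat] using ht⟩, ?_⟩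
  rintro _ ⟨a, ha, rfl⟩
  exact (hf x _).2 ⟨_, ha⟩

theorem mem_mincProblem_iff_exists_stage {r : ℕ → ℕ} {v : ℕ} :
    v ∈ mincProblem r ↔ ∃ t, (∀ s, r s ≠ v) ∧ ∀ j < v, j ∈ pref r t := by
  refine ⟨fun ⟨hout, hin⟩ => ?_, fun ⟨t, hout, hin⟩ => ⟨hout, fun j hj => ?_⟩⟩
  · obtain ⟨t, ht⟩ := exists_pref_forall_lt_mem (g := id) hin
    exact ⟨t, hout, ht⟩
  · obtain ⟨m, -, hm⟩ := mem_pref.1 (hin j hj)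
    exact ⟨m, hm⟩

theorem mem_maxProblem_iff_exists_stage {r : ℕ → ℕ} {v : ℕ} :
    v ∈ maxProblem r ↔ ∃ t, (∀ s, r s ≤ v) ∧ v ∈ pref r t := by
  refine ⟨fun ⟨⟨m, hm⟩, hle⟩ => ⟨m + 1, hle, mem_pref.2 ⟨m, m.lt_succ_self, hm⟩⟩,
    fun ⟨t, hle, hmem⟩ => ⟨?_, hle⟩⟩
  obtain ⟨m, -, hm⟩ := mem_pref.1 hmem
  exact ⟨m, hm⟩

open Primrec in
theorem minc_swRed_cNat : SWRed repBaire repNat enumNegRep repNat mincProblem CNat := by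
  have hmem : PrimrecRel fun (j : ℕ) (x : List ℕ × ℕ) => j ∈ x.1 :=
    primrecRel_mem.comp fst (fst.comp snd)
  have hQ : PrimrecRel fun (u : List ℕ) (v : ℕ) => ∀ j < v, j ∈ u :=
    (hmem.forall_mem_list.comp (list_range.comp snd) Primrec.id).of_eq fun _ => by simp
  exact swRed_cNat_of_mem_iff_exists_stage Primrec.eq.not hQ
    fun _ _ => mem_mincProblem_iff_exists_stage

theorem max_swRed_cNat : SWRed repBaire repNat enumNegRep repNat maxProblem CNat :=
  swRed_cNat_of_mem_iff_exists_stage Primrec.nat_le primrecRel_mem.swap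
    fun _ _ => mem_maxProblem_iff_exists_stage

/-- `C_ℕ ≡_sW minᶜ ≡_sW max`. -/
theorem cnat_minc_max :
    SWEquiv enumNegRep repNat repBaire repNat CNat mincProblem ∧
    SWEquiv enumNegRep repNat repBaire repNat CNat maxProblem :=
  ⟨⟨cNat_swRed_minc, minc_swRed_cNat⟩, ⟨cNat_swRed_max, max_swRed_cNat⟩⟩
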